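/- Let λ be a partition of n and let q ≥ 2 be an integer. Then D⁻_λ(q) ≤ D_λ(q), where D⁻_λ(q) = |(−q)^{a(λ)} · Π_{i=1}^n ((−q)^i − 1) / Π_{(i,j)∈λ} ((−q)^{h_{i,j}} − 1)|. That is, the degree of the unipotent character of GL_n(q) indexed by λ is at least as big as the degree of the unipotent character of GU_n(q) indexed by λ. -/

import Mathlib

open scoped Classical

/-- The hook length of a cell `c` in a Young diagram `Y`: the number of cells `(i',j')` of `Y`
with `i' ≥ i`, `j' ≥ j` and `i' = i` or `j' = j`, where `c = (i,j)` (0-indexed). -/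
def hookLength (Y : YoungDiagram) (c : ℕ × ℕ) : ℕ :=
  (Y.cells.filter fun d => c.1 ≤ d.1 ∧ c.2 ≤ d.2 ∧ (d.1 = c.1 ∨ d.2 = c.2)).card

/-- The statistic `a(λ) = ∑ᵢ (i-1)·aᵢ` of a partition (rows of the diagram are 0-indexed,
so this is the sum of the row indices of all cells). -/
def aStat (Y : YoungDiagram) : ℕ := ∑ c ∈ Y.cells, c.1

/-- The degree `D_λ(q)` of the unipotent character of `GL_n(q)` indexed by the partition `λ`
(quantized hook formula). -/
noncomputable def Dq (Y : YoungDiagram) (q : ℝ) : ℝ :=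
  q ^ aStat Y * (∏ i ∈ Finset.range Y.card, (q ^ (i + 1) - 1)) /
    ∏ c ∈ Y.cells, (q ^ hookLength Y c - 1)

/-- The degree `D⁻_λ(q)` of the unipotent character of `GU_n(q)` indexed by the partition `λ`,
obtained from the quantized hook formula by replacing `q` with `-q` and adjusting the sign. -/
noncomputable def Dqminus (Y : YoungDiagram) (q : ℝ) : ℝ :=
  |(-q) ^ aStat Y * (∏ i ∈ Finset.range Y.card, ((-q) ^ (i + 1) - 1)) /
    ∏ c ∈ Y.cells, ((-q) ^ hookLength Y c - 1)|

/-!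
Put `F(k) = |(-q)^k - 1| / (q^k - 1)`, which is `1` for even `k` and `(q^k + 1)/(q^k - 1)` for
odd `k`. Then `D⁻_λ(q) / D_λ(q) = ∏_{i ≤ n} F(i) / ∏_{(i,j) ∈ λ} F(h_{i,j})`, and every factor is
at least `1`. The factors `F(k)` with `k ≥ 5` tend to `1` so fast that the numerator is at most
`F(1) F(3) (1 + 6/q^5) ≤ F(1) F(3)²`. For the denominator: a one-row diagram (or, after
transposing, a one-column one) has hook lengths exactly `1, …, n`; a diagram with two distinct
corners has two hooks of length `1`, and `F(3)² ≤ F(1)`; the remaining diagrams are rectangles,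
which have hooks of lengths `1, 3, 3`, except the `2 × 2` square, where both sides are `F(1) F(3)`.
-/

open Finset

section hookFactor

variable {q : ℝ} {k : ℕ}

noncomputable def hookFactor (q : ℝ) (k : ℕ) : ℝ := (q ^ k - (-1) ^ k) / (q ^ k - 1)

lemma abs_neg_pow_sub_one (hq : 1 < q) (hk : k ≠ 0) :
    |(-q) ^ k - 1| = hookFactor q k * (q ^ k - 1) := by
  have h1 : 1 < q ^ k := one_lt_pow₀ hq hk
  rw [hookFactor, div_mul_cancel₀ _ (by linarith), neg_pow]
  rcases Nat.even_or_odd k with he | ho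
  · rw [he.neg_one_pow, one_mul, abs_of_pos (by linarith)]
  · rw [ho.neg_one_pow, abs_of_neg (by linarith)]
    ring

lemma one_le_hookFactor (hq : 1 < q) (hk : k ≠ 0) : 1 ≤ hookFactor q k := by
  have h1 : 1 < q ^ k := one_lt_pow₀ hq hk
  rw [hookFactor, le_div_iff₀ (by linarith)]
  rcases Nat.even_or_odd k with he | ho
  · rw [he.neg_one_pow]; linarith
  · rw [ho.neg_one_pow]; linarith

lemma hookFactor_nonneg (hq : 1 < q) (hk : k ≠ 0) : 0 ≤ hookFactor q k :=
  zero_le_one.trans (one_le_hookFactor hq hk)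

lemma hookFactor_of_even (hq : 1 < q) (hk : k ≠ 0) (he : Even k) : hookFactor q k = 1 := by
  have h1 : 1 < q ^ k := one_lt_pow₀ hq hk
  rw [hookFactor, he.neg_one_pow, div_self (by linarith)]

lemma hookFactor_le (hq : 2 ≤ q) (hk : 4 ≤ k) : hookFactor q k ≤ 1 + 32 / 15 / q ^ k := by
  have h16 : 16 ≤ q ^ k :=
    calc (16 : ℝ) = 2 ^ 4 := by norm_num
      _ ≤ q ^ 4 := by gcongr
      _ ≤ q ^ k := pow_le_pow_right₀ (by linarith) hk
  have hneg : -1 ≤ (-1 : ℝ) ^ k := by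
    rcases Nat.even_or_odd k with he | ho
    · rw [he.neg_one_pow]; norm_num
    · rw [ho.neg_one_pow]
  have hsmall : 32 / 15 / q ^ k ≤ 2 / 15 := by
    rw [div_le_iff₀ (by positivity)]; linarith
  have hexpand : (1 + 32 / 15 / q ^ k) * (q ^ k - 1) = q ^ k + 32 / 15 - 1 - 32 / 15 / q ^ k := by
    field_simp
    ring
  rw [hookFactor, div_le_iff₀ (by linarith), hexpand]
  linarith

lemma prod_hookFactor_add_le (hq : 2 ≤ q) (k : ℕ) {m : ℕ} (hm : 4 ≤ m) :
    ∏ i ∈ range k, hookFactor q (m + i) ≤ 1 + 6 / q ^ m := by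
  induction k generalizing m with
  | zero => simp only [prod_range_zero]; linarith [show 0 ≤ 6 / q ^ m by positivity]
  | succ k ih =>
    have h16 : 16 ≤ q ^ m :=
      calc (16 : ℝ) = 2 ^ 4 := by norm_num
        _ ≤ q ^ 4 := by gcongr
        _ ≤ q ^ m := pow_le_pow_right₀ (by linarith) hm
    have hrest : ∏ i ∈ range k, hookFactor q (m + 1 + i) ≤ 1 + 3 / q ^ m := by
      refine (ih (by omega)).trans ?_
      rw [pow_succ, add_le_add_iff_left, div_le_div_iff₀ (by positivity) (by positivity)]
      nlinarith
    rw [prod_range_succ']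
    simp only [← add_assoc, add_right_comm m _ 1, add_zero]
    calc (∏ i ∈ range k, hookFactor q (m + 1 + i)) * hookFactor q m
        ≤ (1 + 3 / q ^ m) * (1 + 32 / 15 / q ^ m) :=
          mul_le_mul hrest (hookFactor_le hq hm) (hookFactor_nonneg (by linarith) (by omega))
            (by positivity)
      _ ≤ 1 + 6 / q ^ m := by
          have hx : (q ^ m)⁻¹ ≤ 16⁻¹ := inv_anti₀ (by norm_num) h16
          have hx0 : 0 ≤ (q ^ m)⁻¹ := by positivity
          simp only [div_eq_mul_inv _ (q ^ m)]
          nlinarith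

lemma prod_hookFactor_range_four (hq : 1 < q) :
    ∏ i ∈ range 4, hookFactor q (i + 1) = hookFactor q 1 * hookFactor q 3 := by
  simp [prod_range_succ, hookFactor_of_even hq two_ne_zero even_two,
    hookFactor_of_even hq four_ne_zero (by decide : Even 4)]

lemma prod_hookFactor_range_le_of_le_four (hq : 1 < q) {n : ℕ} (hn : n ≤ 4) :
    ∏ i ∈ range n, hookFactor q (i + 1) ≤ hookFactor q 1 * hookFactor q 3 := by
  have h1 := one_le_hookFactor hq one_ne_zero
  have h3 := one_le_hookFactor hq three_ne_zero
  interval_cases n <;>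
    simp [prod_range_succ, hookFactor_of_even hq two_ne_zero even_two,
      hookFactor_of_even hq four_ne_zero (by decide : Even 4)] <;> nlinarith

lemma le_hookFactor_three (hq : 2 ≤ q) : 1 + 6 / q ^ 5 ≤ hookFactor q 3 := by
  have h8 : (2 : ℝ) ^ 3 ≤ q ^ 3 := by gcongr
  have hexpand : (1 + 6 / q ^ 5) * (q ^ 3 - 1) = q ^ 3 - 1 + 6 / q ^ 2 - 6 / q ^ 5 := by
    field_simp
    ring
  have hsmall : 6 / q ^ 2 ≤ 3 / 2 := by
    rw [div_le_iff₀ (by positivity)]; nlinarith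
  rw [hookFactor, le_div_iff₀ (by linarith), hexpand, Odd.neg_one_pow (by decide)]
  linarith [show 0 ≤ 6 / q ^ 5 by positivity]

lemma hookFactor_three_mul_self_le (hq : 2 ≤ q) :
    hookFactor q 3 * hookFactor q 3 ≤ hookFactor q 1 := by
  have h8 : (2 : ℝ) ^ 3 ≤ q ^ 3 := by gcongr
  rw [hookFactor, hookFactor, div_mul_div_comm, div_le_div_iff₀ (by nlinarith) (by linarith),
    Odd.neg_one_pow (by decide), pow_one]
  nlinarith [mul_nonneg (mul_nonneg (by linarith : (0:ℝ) ≤ q) (by linarith : (0:ℝ) ≤ q))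
    (by nlinarith : (0:ℝ) ≤ q ^ 2 - 4)]

lemma prod_hookFactor_range_le (hq : 2 ≤ q) (n : ℕ) :
    ∏ i ∈ range n, hookFactor q (i + 1) ≤ hookFactor q 1 * hookFactor q 3 * hookFactor q 3 := by
  have hq1 : 1 < q := by linarith
  have h13 : 0 ≤ hookFactor q 1 * hookFactor q 3 :=
    mul_nonneg (hookFactor_nonneg hq1 one_ne_zero) (hookFactor_nonneg hq1 three_ne_zero)
  rcases le_or_gt n 4 with hn | hn
  · exact (prod_hookFactor_range_le_of_le_four hq1 hn).trans
      (le_mul_of_one_le_right h13 (one_le_hookFactor hq1 three_ne_zero))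
  obtain ⟨k, rfl⟩ : ∃ k, n = 4 + k := ⟨n - 4, by omega⟩
  rw [prod_range_add, prod_hookFactor_range_four hq1]
  have htail : ∏ i ∈ range k, hookFactor q (4 + i + 1) ≤ 1 + 6 / q ^ 5 := by
    simpa only [add_right_comm 4 _ 1] using prod_hookFactor_add_le hq k (m := 5) (by norm_num)
  exact mul_le_mul_of_nonneg_left (htail.trans (le_hookFactor_three hq)) h13

end hookFactor

section hookLength

open YoungDiagram

variable {Y : YoungDiagram} {i j : ℕ}

lemma hookLength_add (h : (i, j) ∈ Y) :
    hookLength Y (i, j) + i + j + 1 = Y.rowLen i + Y.colLen j := by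
  have hhook : (Y.cells.filter fun d => i ≤ d.1 ∧ j ≤ d.2 ∧ (d.1 = i ∨ d.2 = j)) =
      ({i} ×ˢ Ico j (Y.rowLen i)) ∪ (Ico i (Y.colLen j) ×ˢ {j}) := by
    ext ⟨x, y⟩
    simp only [mem_filter, mem_union, mem_product, mem_Ico, mem_singleton, mem_cells]
    constructor
    · rintro ⟨hmem, hix, hjy, rfl | rfl⟩
      · exact Or.inl ⟨rfl, hjy, mem_iff_lt_rowLen.mp hmem⟩
      · exact Or.inr ⟨⟨hix, mem_iff_lt_colLen.mp hmem⟩, rfl⟩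
    · rintro (⟨rfl, hjy, hy⟩ | ⟨⟨hix, hx⟩, rfl⟩)
      · exact ⟨mem_iff_lt_rowLen.mpr hy, le_rfl, hjy, Or.inl rfl⟩
      · exact ⟨mem_iff_lt_colLen.mpr hx, hix, le_rfl, Or.inr rfl⟩
  have hcorner : ({i} ×ˢ Ico j (Y.rowLen i)) ∩ (Ico i (Y.colLen j) ×ˢ {j}) = {(i, j)} := by
    ext ⟨x, y⟩
    simp only [mem_inter, mem_product, mem_Ico, mem_singleton, Prod.mk.injEq]
    have := mem_iff_lt_rowLen.mp h
    have := mem_iff_lt_colLen.mp h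
    omega
  have hcard := card_union_add_card_inter ({i} ×ˢ Ico j (Y.rowLen i)) (Ico i (Y.colLen j) ×ˢ {j})
  rw [hcorner] at hcard
  rw [hookLength, hhook]
  simp only [card_singleton, card_product, Nat.card_Ico] at hcard ⊢
  have := mem_iff_lt_rowLen.mp h
  have := mem_iff_lt_colLen.mp h
  omega

lemma hookLength_ne_zero {c : ℕ × ℕ} (h : c ∈ Y) : hookLength Y c ≠ 0 := by
  obtain ⟨i, j⟩ := c
  have := hookLength_add h
  have := mem_iff_lt_rowLen.mp h
  have := mem_iff_lt_colLen.mp h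
  omega

lemma hookLength_eq_one (h : (i, j) ∈ Y) (hrow : Y.rowLen i = j + 1) (hcol : Y.colLen j = i + 1) :
    hookLength Y (i, j) = 1 := by
  have := hookLength_add h
  omega

lemma hookLength_transpose (h : (i, j) ∈ Y) :
    hookLength Y.transpose (j, i) = hookLength Y (i, j) := by
  have hT := hookLength_add (mem_transpose.mpr h : (j, i) ∈ Y.transpose)
  rw [rowLen_transpose, colLen_transpose] at hT
  have := hookLength_add h
  omega

lemma card_transpose : Y.transpose.card = Y.card :=
  card_equiv (Equiv.prodComm ℕ ℕ) fun _ => by simp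

lemma prod_hookLength_transpose {M : Type*} [CommMonoid M] (f : ℕ → M) :
    ∏ c ∈ Y.transpose.cells, f (hookLength Y.transpose c) = ∏ c ∈ Y.cells, f (hookLength Y c) :=
  prod_equiv (Equiv.prodComm ℕ ℕ) (fun _ => by simp) fun c hc => by
    rw [mem_cells, mem_transpose] at hc
    exact congrArg f (hookLength_transpose hc)

lemma card_le_colLen_mul_rowLen : Y.card ≤ Y.colLen 0 * Y.rowLen 0 := by
  have hsub : Y.cells ⊆ range (Y.colLen 0) ×ˢ range (Y.rowLen 0) := fun ⟨x, y⟩ h => by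
    rw [mem_cells] at h
    simp only [mem_product, mem_range]
    exact ⟨(mem_iff_lt_colLen.mp h).trans_le (Y.colLen_anti 0 y (Nat.zero_le _)),
      (mem_iff_lt_rowLen.mp h).trans_le (Y.rowLen_anti 0 x (Nat.zero_le _))⟩
  simpa using card_le_card hsub

lemma cells_eq_of_colLen_le_one (hr : Y.colLen 0 ≤ 1) : Y.cells = {0} ×ˢ range (Y.rowLen 0) := by
  ext ⟨x, y⟩
  simp only [mem_cells, mem_product, mem_singleton, mem_range]
  constructor
  · intro h
    have hx := (mem_iff_lt_colLen.mp h).trans_le ((Y.colLen_anti 0 y (Nat.zero_le _)).trans hr)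
    obtain rfl : x = 0 := by omega
    exact ⟨rfl, mem_iff_lt_rowLen.mp h⟩
  · rintro ⟨rfl, hy⟩
    exact mem_iff_lt_rowLen.mpr hy

lemma prod_hookLength_of_colLen_le_one {M : Type*} [CommMonoid M] (f : ℕ → M)
    (hr : Y.colLen 0 ≤ 1) : ∏ c ∈ Y.cells, f (hookLength Y c) = ∏ i ∈ range Y.card, f (i + 1) := by
  have hcells := cells_eq_of_colLen_le_one hr
  have hcard : Y.card = Y.rowLen 0 := by simp [YoungDiagram.card, hcells]
  rw [hcard, hcells, prod_product, prod_singleton, ← prod_range_reflect (fun i => f (i + 1))]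
  refine prod_congr rfl fun y hy => ?_
  have hmem : (0, y) ∈ Y := mem_iff_lt_rowLen.mpr (mem_range.mp hy)
  have hcol : Y.colLen y = 1 :=
    le_antisymm ((Y.colLen_anti 0 y (Nat.zero_le _)).trans hr) (mem_iff_lt_colLen.mp hmem)
  have := hookLength_add hmem
  have := mem_range.mp hy
  congr 1
  omega

lemma hookLength_add_of_rowLen_eq (hfull : Y.rowLen (Y.colLen 0 - 1) = Y.rowLen 0)
    (hi : i < Y.colLen 0) (hj : j < Y.rowLen 0) :
    (i, j) ∈ Y ∧ hookLength Y (i, j) + i + j + 1 = Y.colLen 0 + Y.rowLen 0 := by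
  have hrow : Y.rowLen i = Y.rowLen 0 :=
    le_antisymm (Y.rowLen_anti 0 i (Nat.zero_le _)) (hfull ▸ Y.rowLen_anti i _ (by omega))
  have hmem : (i, j) ∈ Y := mem_iff_lt_rowLen.mpr (hrow ▸ hj)
  have hcol : Y.colLen j = Y.colLen 0 := by
    have hlast : (Y.colLen 0 - 1, j) ∈ Y := mem_iff_lt_rowLen.mpr (hfull ▸ hj)
    have := mem_iff_lt_colLen.mp hlast
    have := Y.colLen_anti 0 j (Nat.zero_le _)
    omega
  refine ⟨hmem, ?_⟩
  rw [hookLength_add hmem, hrow, hcol, add_comm]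

end hookLength

section comparison

open YoungDiagram

variable {q : ℝ} {Y : YoungDiagram}

lemma prod_hookFactor_le_of_subset (hq : 1 < q) {S : Finset (ℕ × ℕ)} (hS : S ⊆ Y.cells) :
    ∏ c ∈ S, hookFactor q (hookLength Y c) ≤ ∏ c ∈ Y.cells, hookFactor q (hookLength Y c) :=
  prod_le_prod_of_subset_of_one_le hS
    (fun _ hc => hookFactor_nonneg hq (hookLength_ne_zero ((mem_cells _).mp (hS hc))))
    fun _ hc _ => one_le_hookFactor hq (hookLength_ne_zero ((mem_cells _).mp hc))

/-- The end of the last row and the foot of the last column are then two distinct corners. -/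
lemma hookFactor_one_mul_self_le_of_rowLen_lt (hq : 1 < q) (hr : 0 < Y.colLen 0)
    (hlast : Y.rowLen (Y.colLen 0 - 1) < Y.rowLen 0) :
    hookFactor q 1 * hookFactor q 1 ≤ ∏ c ∈ Y.cells, hookFactor q (hookLength Y c) := by
  set r := Y.colLen 0
  set a := Y.rowLen 0
  set b := Y.rowLen (r - 1)
  set s := Y.colLen (a - 1)
  have hb : 0 < b := mem_iff_lt_rowLen.mp (mem_iff_lt_colLen.mpr (by omega : r - 1 < r))
  have hs : 0 < s := mem_iff_lt_colLen.mp (mem_iff_lt_rowLen.mpr (by omega : a - 1 < a))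
  have h1 : (r - 1, b - 1) ∈ Y := mem_iff_lt_rowLen.mpr (by omega)
  have h2 : (s - 1, a - 1) ∈ Y := mem_iff_lt_colLen.mpr (by omega)
  have hcol1 : Y.colLen (b - 1) = r - 1 + 1 := by
    have := mem_iff_lt_colLen.mp h1
    have := Y.colLen_anti 0 (b - 1) (Nat.zero_le _)
    omega
  have hrow2 : Y.rowLen (s - 1) = a - 1 + 1 := by
    have := mem_iff_lt_rowLen.mp h2
    have := Y.rowLen_anti 0 (s - 1) (Nat.zero_le _)
    omega
  have hne : (r - 1, b - 1) ≠ (s - 1, a - 1) := by simp only [ne_eq, Prod.mk.injEq]; omega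
  have hsub : {(r - 1, b - 1), (s - 1, a - 1)} ⊆ Y.cells := by
    simp [insert_subset_iff, h1, h2]
  calc hookFactor q 1 * hookFactor q 1
      = ∏ c ∈ {(r - 1, b - 1), (s - 1, a - 1)}, hookFactor q (hookLength Y c) := by
        rw [prod_pair hne, hookLength_eq_one h1 (by omega) hcol1,
          hookLength_eq_one h2 hrow2 (by omega)]
    _ ≤ _ := prod_hookFactor_le_of_subset hq hsub

lemma prod_hookFactor_range_le_of_rowLen_eq (hq : 2 ≤ q) (hr : 2 ≤ Y.colLen 0)
    (hra : Y.colLen 0 ≤ Y.rowLen 0) (hfull : Y.rowLen (Y.colLen 0 - 1) = Y.rowLen 0) :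
    ∏ i ∈ range Y.card, hookFactor q (i + 1) ≤ ∏ c ∈ Y.cells, hookFactor q (hookLength Y c) := by
  have hq1 : 1 < q := by linarith
  set r := Y.colLen 0
  set a := Y.rowLen 0
  rcases (by omega : a = 2 ∨ 3 ≤ a) with ha | ha
  · obtain ⟨h00, hook00⟩ :=
      hookLength_add_of_rowLen_eq (i := 0) (j := 0) hfull (by omega) (by omega)
    obtain ⟨h11, hook11⟩ :=
      hookLength_add_of_rowLen_eq (i := 1) (j := 1) hfull (by omega) (by omega)
    have hsub : {(0, 0), (1, 1)} ⊆ Y.cells := by simp [insert_subset_iff, h00, h11]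
    calc ∏ i ∈ range Y.card, hookFactor q (i + 1)
        ≤ hookFactor q 1 * hookFactor q 3 := prod_hookFactor_range_le_of_le_four hq1 <|
          card_le_colLen_mul_rowLen.trans (Nat.mul_le_mul (by omega : r ≤ 2) ha.le)
      _ = ∏ c ∈ {(0, 0), (1, 1)}, hookFactor q (hookLength Y c) := by
        rw [prod_pair (by simp), (by omega : hookLength Y (0, 0) = 3),
          (by omega : hookLength Y (1, 1) = 1), mul_comm]
      _ ≤ _ := prod_hookFactor_le_of_subset hq1 hsub
  · obtain ⟨h1, hook1⟩ :=
      hookLength_add_of_rowLen_eq (i := r - 1) (j := a - 1) hfull (by omega) (by omega)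
    obtain ⟨h2, hook2⟩ :=
      hookLength_add_of_rowLen_eq (i := r - 2) (j := a - 2) hfull (by omega) (by omega)
    obtain ⟨h3, hook3⟩ :=
      hookLength_add_of_rowLen_eq (i := r - 1) (j := a - 3) hfull (by omega) (by omega)
    have hsub : {(r - 1, a - 1), (r - 2, a - 2), (r - 1, a - 3)} ⊆ Y.cells := by
      simp [insert_subset_iff, h1, h2, h3]
    calc ∏ i ∈ range Y.card, hookFactor q (i + 1)
        ≤ hookFactor q 1 * hookFactor q 3 * hookFactor q 3 := prod_hookFactor_range_le hq _
      _ = ∏ c ∈ {(r - 1, a - 1), (r - 2, a - 2), (r - 1, a - 3)},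
            hookFactor q (hookLength Y c) := by
        rw [prod_insert (by simp only [mem_insert, mem_singleton, Prod.mk.injEq]; omega),
          prod_pair (by simp only [ne_eq, Prod.mk.injEq]; omega),
          (by omega : hookLength Y (r - 1, a - 1) = 1),
          (by omega : hookLength Y (r - 2, a - 2) = 3),
          (by omega : hookLength Y (r - 1, a - 3) = 3), mul_assoc]
      _ ≤ _ := prod_hookFactor_le_of_subset hq1 hsub

lemma prod_hookFactor_range_le_of_colLen_le_rowLen (hq : 2 ≤ q) (hra : Y.colLen 0 ≤ Y.rowLen 0) :
    ∏ i ∈ range Y.card, hookFactor q (i + 1) ≤ ∏ c ∈ Y.cells, hookFactor q (hookLength Y c) := by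
  have hq1 : 1 < q := by linarith
  rcases le_or_gt (Y.colLen 0) 1 with hr | hr
  · exact (prod_hookLength_of_colLen_le_one _ hr).ge
  rcases (Y.rowLen_anti 0 (Y.colLen 0 - 1) (Nat.zero_le _)).lt_or_eq with hlast | hfull
  · calc ∏ i ∈ range Y.card, hookFactor q (i + 1)
        ≤ hookFactor q 1 * (hookFactor q 3 * hookFactor q 3) :=
          (prod_hookFactor_range_le hq _).trans_eq (mul_assoc _ _ _)
      _ ≤ hookFactor q 1 * hookFactor q 1 :=
          mul_le_mul_of_nonneg_left (hookFactor_three_mul_self_le hq)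
            (hookFactor_nonneg hq1 one_ne_zero)
      _ ≤ _ := hookFactor_one_mul_self_le_of_rowLen_lt hq1 (by omega) hlast
  · exact prod_hookFactor_range_le_of_rowLen_eq hq hr hra hfull

theorem prod_hookFactor_range_le_prod_hookFactor (hq : 2 ≤ q) (Y : YoungDiagram) :
    ∏ i ∈ range Y.card, hookFactor q (i + 1) ≤ ∏ c ∈ Y.cells, hookFactor q (hookLength Y c) := by
  rcases le_total (Y.colLen 0) (Y.rowLen 0) with hra | hra
  · exact prod_hookFactor_range_le_of_colLen_le_rowLen hq hra
  · have := prod_hookFactor_range_le_of_colLen_le_rowLen (Y := Y.transpose) hq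
      (by rwa [colLen_transpose, rowLen_transpose])
    rwa [card_transpose, prod_hookLength_transpose] at this

end comparison

lemma Dq_nonneg {q : ℝ} (hq : 1 < q) (Y : YoungDiagram) : 0 ≤ Dq Y q := by
  have hpos : ∀ k ≠ 0, 0 < q ^ k - 1 := fun k hk => sub_pos.mpr (one_lt_pow₀ hq hk)
  unfold Dq
  exact div_nonneg (mul_nonneg (by positivity) (prod_nonneg fun i _ => (hpos _ i.succ_ne_zero).le))
    (prod_nonneg fun c hc => (hpos _ (hookLength_ne_zero ((YoungDiagram.mem_cells c).mp hc))).le)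

lemma Dqminus_eq {q : ℝ} (hq : 1 < q) (Y : YoungDiagram) :
    Dqminus Y q = Dq Y q * (∏ i ∈ range Y.card, hookFactor q (i + 1)) /
      ∏ c ∈ Y.cells, hookFactor q (hookLength Y c) := by
  have hnum : ∏ i ∈ range Y.card, |(-q) ^ (i + 1) - 1| =
      (∏ i ∈ range Y.card, hookFactor q (i + 1)) * ∏ i ∈ range Y.card, (q ^ (i + 1) - 1) := by
    rw [← prod_mul_distrib]
    exact prod_congr rfl fun i _ => abs_neg_pow_sub_one hq i.succ_ne_zero
  have hden : ∏ c ∈ Y.cells, |(-q) ^ hookLength Y c - 1| =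
      (∏ c ∈ Y.cells, hookFactor q (hookLength Y c)) * ∏ c ∈ Y.cells, (q ^ hookLength Y c - 1) := by
    rw [← prod_mul_distrib]
    exact prod_congr rfl fun c hc =>
      abs_neg_pow_sub_one hq (hookLength_ne_zero ((YoungDiagram.mem_cells c).mp hc))
  rw [Dqminus, Dq, abs_div, abs_mul, abs_prod, abs_prod, abs_pow, abs_neg,
    abs_of_pos (by linarith), hnum, hden]
  ring

theorem stmt10 (q : ℤ) (hq : 2 ≤ q) (Y : YoungDiagram) :
    Dqminus Y (q : ℝ) ≤ Dq Y (q : ℝ) := by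
  have hq' : (2 : ℝ) ≤ q := by exact_mod_cast hq
  have hq1 : (1 : ℝ) < q := by linarith
  have hden : 0 ≤ ∏ c ∈ Y.cells, hookFactor q (hookLength Y c) :=
    prod_nonneg fun c hc =>
      hookFactor_nonneg hq1 (hookLength_ne_zero ((YoungDiagram.mem_cells c).mp hc))
  rw [Dqminus_eq hq1, mul_div_assoc]
  exact mul_le_of_le_one_right (Dq_nonneg hq1 Y)
    (div_le_one_of_le₀ (prod_hookFactor_range_le_prod_hookFactor hq' Y) hden)
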